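/- Let p be a prime and let k ≥ 3 be an integer with p ∤ k. Then ℛ' = {j ∈ ℛ : p ∤ j}. Moreover, if p ∤ (k−1) then #ℛ' = k − ⌊k/p⌋, while if k = m p^b + 1 with m, b ≥ 1 integers and p ∤ m, then #ℛ' = (1 − 1/p)(k − p^b) + (1 + 1/p). -/

import Mathlib

/-!
Write `k - 1 = m p^b` with `p ∤ m`. If `b = 0`, then `C(k, k-1) = k` is prime to `p`, so
`j₀ = k - 1` and `ℛ = {1, …, k}`. If `b ≥ 1`, then `p^b ∣ k - 1` makes `p` divide `C(k - 1, t)`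
for `0 < t < p^b`, so by Pascal's rule `p ∣ C(k, s)` for `2 ≤ s < p^b`, while Lucas' theorem gives
`C(m p^b, p^b) ≡ m (mod p)`, so `p ∤ C(k, p^b)`; hence `j₀ = k - p^b`. A `p`-free `j` with
`p^v j ∈ ℛ` is then at most `j₀`, equal to `k` (and `v = 0`), or the `p`-free part `m` of `k - 1`,
which lies in `ℛ` in both cases; this gives `ℛ' = {j ∈ ℛ : p ∤ j}`. The counts follow from
counting the integers in `[1, n]` prime to `p`, using `j₀ ≡ 1 (mod p)` in the second case.
-/

open scoped Classical

noncomputable section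

namespace FFW

/-- `j_0 = j_0(k)`: the largest `j` with `0 < j < k`, `p ∤ j` and `p ∤ C(k, j)`. -/
def j0 (p k : ℕ) : ℕ :=
  Nat.findGreatest (fun j => 0 < j ∧ ¬ p ∣ j ∧ ¬ p ∣ Nat.choose k j) (k - 1)

/-- The set `ℛ = {1, 2, …, j_0} ∪ {k−1, k}`. -/
def Rset (p k : ℕ) : Finset ℕ := Finset.Icc 1 (j0 p k) ∪ {k - 1, k}

/-- The set `ℛ' = {j ∈ ℕ : p ∤ j and p^v j ∈ ℛ for some v ≥ 0}` (its elements all lie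
in `{1, …, k}`). -/
def R'set (p k : ℕ) : Finset ℕ :=
  (Finset.Icc 1 k).filter fun j => ¬ p ∣ j ∧ ∃ v : ℕ, p ^ v * j ∈ Rset p k

end FFW

open Finset

namespace Nat

theorem card_filter_not_dvd_Icc (p n : ℕ) : #{j ∈ Finset.Icc 1 n | ¬ p ∣ j} = n - n / p := by
  have hdvd : #{j ∈ Finset.Icc 1 n | p ∣ j} = n / p := Ioc_filter_dvd_card_eq_div n p
  have := Finset.card_filter_add_card_filter_not (s := Finset.Icc 1 n) (fun j => p ∣ j)
  rw [card_Icc, hdvd] at this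
  omega

variable {p : ℕ}

theorem Prime.dvd_choose_of_pow_dvd (hp : p.Prime) {b n t : ℕ} (hn : p ^ b ∣ n) (ht₀ : 0 < t)
    (ht : t < p ^ b) : p ∣ n.choose t := by
  obtain ⟨s, rfl⟩ : ∃ s, t = s + 1 := ⟨t - 1, by omega⟩
  rcases n with _ | n
  · simp
  by_contra h
  have hmul : p ^ b ∣ (n + 1).choose (s + 1) * (s + 1) := add_one_mul_choose_eq n s ▸ hn.mul_right _
  have hcop : (p ^ b).Coprime ((n + 1).choose (s + 1)) :=
    ((hp.coprime_iff_not_dvd).2 h).pow_left b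
  exact absurd (le_of_dvd (succ_pos s) (hcop.dvd_of_dvd_mul_left hmul)) (not_le.2 ht)

theorem Prime.choose_mul_pow_modEq (hp : p.Prime) (m : ℕ) :
    ∀ b, (m * p ^ b).choose (p ^ b) ≡ m [MOD p]
  | 0 => by simp [ModEq]
  | b + 1 => by
    have : Fact p.Prime := ⟨hp⟩
    have lucas := Choose.choose_modEq_choose_mod_mul_choose_div_nat
      (p := p) (n := m * p ^ b * p) (k := p ^ b * p)
    rw [mul_mod_left, mul_mod_left, Nat.mul_div_cancel _ hp.pos, Nat.mul_div_cancel _ hp.pos,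
      choose_self, one_mul] at lucas
    rw [pow_succ, ← mul_assoc]
    exact lucas.trans (hp.choose_mul_pow_modEq m b)

theorem cast_card_filter_not_dvd_Icc_of_mod_eq_one {n : ℕ} (hp : p ≠ 0) (hn : n % p = 1) :
    (#{j ∈ Finset.Icc 1 n | ¬ p ∣ j} : ℚ) = (1 - 1 / p) * n + 1 / p := by
  have hdiv : (p : ℚ) * (n / p : ℕ) = n - 1 := by
    have := div_add_mod n p
    rw [hn] at this
    rw [eq_sub_iff_add_eq]
    exact_mod_cast this
  rw [card_filter_not_dvd_Icc, cast_sub (div_le_self n p)]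
  field_simp
  linarith

end Nat

namespace FFW

variable {p k : ℕ}

theorem j0_le_sub_one : j0 p k ≤ k - 1 := Nat.findGreatest_le _

theorem le_of_mem_Rset {j : ℕ} (hj : j ∈ Rset p k) : j ≤ k := by
  have := j0_le_sub_one (p := p) (k := k)
  simp only [Rset, mem_union, mem_Icc, mem_insert, mem_singleton] at hj
  omega

theorem Rset_eq_Icc_of_not_dvd_sub_one (hpk : ¬ p ∣ k) (hpk₁ : ¬ p ∣ k - 1) :
    Rset p k = Icc 1 k := by
  have hk : 2 ≤ k := by
    by_contra! h
    interval_cases k <;> simp_all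
  have hj0 : j0 p k = k - 1 := by
    refine Nat.findGreatest_eq ⟨by omega, hpk₁, ?_⟩
    rwa [Nat.choose_symm (by omega), Nat.choose_one_right]
  ext j
  simp only [Rset, hj0, mem_union, mem_Icc, mem_insert, mem_singleton]
  omega

section MulPowAddOne

variable {m b : ℕ}

theorem dvd_choose_of_eq_mul_pow_add_one (hp : p.Prime) (hk : k = m * p ^ b + 1) {s : ℕ}
    (hs₂ : 2 ≤ s) (hs : s < p ^ b) : p ∣ k.choose s := by
  obtain ⟨t, rfl⟩ : ∃ t, s = t + 1 := ⟨s - 1, by omega⟩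
  rw [hk, Nat.choose_succ_succ']
  exact dvd_add (hp.dvd_choose_of_pow_dvd (dvd_mul_left _ _) (by omega) (by omega))
    (hp.dvd_choose_of_pow_dvd (dvd_mul_left _ _) (by omega) hs)

theorem not_dvd_choose_pow_of_eq_mul_pow_add_one (hp : p.Prime) (hpm : ¬ p ∣ m) (hb : 1 ≤ b)
    (hk : k = m * p ^ b + 1) : ¬ p ∣ k.choose (p ^ b) := by
  have hpb : p ≤ p ^ b := Nat.le_self_pow (by omega) p
  obtain ⟨t, ht⟩ : ∃ t, p ^ b = t + 1 := ⟨p ^ b - 1, by have := hp.pos; omega⟩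
  have hpt : p ∣ (m * p ^ b).choose t :=
    hp.dvd_choose_of_pow_dvd (dvd_mul_left _ _) (by have := hp.two_le; omega) (by omega)
  rw [hk, ht, Nat.choose_succ_succ', ← ht, Nat.dvd_add_right hpt,
    (hp.choose_mul_pow_modEq m b).dvd_iff dvd_rfl]
  exact hpm

theorem sub_pow_mod_eq_one_of_eq_mul_pow_add_one (hp : p.Prime) (hpm : ¬ p ∣ m) (hb : 1 ≤ b)
    (hk : k = m * p ^ b + 1) : (k - p ^ b) % p = 1 := by
  obtain ⟨m, rfl⟩ : ∃ m', m = m' + 1 := ⟨m - 1, by rcases m with _ | m <;> simp_all⟩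
  obtain ⟨c, hc⟩ : p ∣ p ^ b := dvd_pow_self p (by omega)
  rw [show k - p ^ b = p * (m * c) + 1 by rw [hk, hc]; ring_nf; omega,
    Nat.mul_add_mod, Nat.mod_eq_of_lt hp.one_lt]

theorem dvd_sub_one_of_eq_mul_pow_add_one (hb : 1 ≤ b) (hk : k = m * p ^ b + 1) : p ∣ k - 1 := by
  rw [hk, Nat.add_sub_cancel]
  exact (dvd_pow_self p (by omega)).mul_left m

theorem j0_eq_sub_pow (hp : p.Prime) (hpm : ¬ p ∣ m) (hb : 1 ≤ b) (hk : k = m * p ^ b + 1) :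
    j0 p k = k - p ^ b := by
  have hpb : 2 ≤ p ^ b := hp.two_le.trans (Nat.le_self_pow (by omega) p)
  have hmod := sub_pow_mod_eq_one_of_eq_mul_pow_add_one hp hpm hb hk
  have hpk₁ := dvd_sub_one_of_eq_mul_pow_add_one hb hk
  refine Nat.findGreatest_eq_iff.2 ⟨by omega, fun h => ⟨by omega, ?_, ?_⟩, ?_⟩
  · rw [Nat.dvd_iff_mod_eq_zero, hmod]; exact one_ne_zero
  · rw [Nat.choose_symm (by omega)]
    exact not_dvd_choose_pow_of_eq_mul_pow_add_one hp hpm hb hk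
  · rintro j hj hjk ⟨-, hpj, hchoose⟩
    rcases eq_or_lt_of_le hjk with rfl | hjk
    · exact hpj hpk₁
    · rw [← Nat.choose_symm (by omega)] at hchoose
      exact hchoose (dvd_choose_of_eq_mul_pow_add_one hp hk (by omega) (by omega))

theorem le_j0_of_eq_mul_pow_add_one (hp : p.Prime) (hpm : ¬ p ∣ m) (hb : 1 ≤ b)
    (hk : k = m * p ^ b + 1) : m ≤ j0 p k := by
  rw [j0_eq_sub_pow hp hpm hb hk, hk]
  have hm : 1 ≤ m := Nat.pos_of_ne_zero (by rintro rfl; exact hpm (dvd_zero p))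
  have : 1 ≤ p ^ b := Nat.one_le_pow _ _ hp.pos
  have : m + p ^ b ≤ m * p ^ b + 1 := by nlinarith
  omega

end MulPowAddOne

theorem ordCompl_sub_one_mem_Rset (hp : p.Prime) (hk : 2 ≤ k) :
    ordCompl[p] (k - 1) ∈ Rset p k := by
  by_cases hpk₁ : p ∣ k - 1
  · have hk' : k = ordCompl[p] (k - 1) * p ^ (k - 1).factorization p + 1 := by
      have := Nat.ordProj_mul_ordCompl_eq_self (k - 1) p
      rw [mul_comm] at this
      omega
    have hm := le_j0_of_eq_mul_pow_add_one hp (Nat.not_dvd_ordCompl hp (by omega))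
      (hp.factorization_pos_of_dvd (by omega) hpk₁) hk'
    simp only [Rset, mem_union, mem_Icc]
    exact Or.inl ⟨Nat.ordCompl_pos p (by omega), hm⟩
  · rw [(Nat.ordCompl_eq_self_iff_zero_or_not_dvd _ hp).2 (Or.inr hpk₁)]
    simp [Rset]

theorem R'set_eq_filter_Rset (hp : p.Prime) (hpk : ¬ p ∣ k) :
    R'set p k = (Rset p k).filter (fun j => ¬ p ∣ j) := by
  ext j
  simp only [R'set, mem_filter, mem_Icc]
  constructor
  · rintro ⟨-, hpj, v, hv⟩
    refine ⟨?_, hpj⟩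
    have hj : 0 < j := Nat.pos_of_ne_zero (by rintro rfl; exact hpj (dvd_zero p))
    have hjv : j ≤ p ^ v * j := Nat.le_mul_of_pos_left j (pow_pos hp.pos v)
    simp only [Rset, mem_union, mem_Icc, mem_insert, mem_singleton] at hv
    rcases hv with ⟨-, hv⟩ | hv | hv
    · simp only [Rset, mem_union, mem_Icc]
      exact Or.inl ⟨hj, hjv.trans hv⟩
    · have hjk : j = ordCompl[p] (k - 1) := by
        rw [← hv, Nat.ordCompl_pow_mul_of_not_dvd v hp hpj]
      exact hjk ▸ ordCompl_sub_one_mem_Rset hp (by omega)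
    · rcases v with _ | v
      · simp [← hv, Rset]
      · exact absurd (hv ▸ (dvd_pow_self p v.succ_ne_zero).mul_right j) hpk
  · rintro ⟨hjR, hpj⟩
    exact ⟨⟨Nat.pos_of_ne_zero (by rintro rfl; exact hpj (dvd_zero p)), le_of_mem_Rset hjR⟩,
      hpj, 0, by simpa using hjR⟩

theorem Rset_filter_not_dvd_eq_insert (hpk₁ : p ∣ k - 1) (hpk : ¬ p ∣ k) :
    (Rset p k).filter (fun j => ¬ p ∣ j) =
      insert k ((Icc 1 (j0 p k)).filter (fun j => ¬ p ∣ j)) := by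
  rw [Rset, filter_union, filter_insert, filter_singleton, if_neg (not_not.2 hpk₁), if_pos hpk,
    union_comm, insert_eq]

theorem R'set_eq_and_card_general (p k : ℕ) (hp : p.Prime) (hpk : ¬ p ∣ k) :
    R'set p k = (Rset p k).filter (fun j => ¬ p ∣ j) ∧
    (¬ p ∣ (k - 1) → (R'set p k).card = k - k / p) ∧
    (∀ m b : ℕ, 1 ≤ m → 1 ≤ b → ¬ p ∣ m → k = m * p ^ b + 1 →
      ((R'set p k).card : ℚ) = (1 - 1 / (p : ℚ)) * ((k : ℚ) - (p : ℚ) ^ b) + (1 + 1 / (p : ℚ))) := by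
  have hR' := R'set_eq_filter_Rset hp hpk
  refine ⟨hR', fun hpk₁ => ?_, fun m b _ hb hpm hk => ?_⟩
  · rw [hR', Rset_eq_Icc_of_not_dvd_sub_one hpk hpk₁, Nat.card_filter_not_dvd_Icc]
  · have hj0 := j0_eq_sub_pow hp hpm hb hk
    have hpb₁ : 1 ≤ p ^ b := Nat.one_le_pow b p hp.pos
    have hpb : p ^ b ≤ k := by rw [hk]; nlinarith
    have hk_notMem : k ∉ (Icc 1 (j0 p k)).filter (fun j => ¬ p ∣ j) := by
      simp only [mem_filter, mem_Icc, hj0]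
      omega
    rw [hR', Rset_filter_not_dvd_eq_insert (dvd_sub_one_of_eq_mul_pow_add_one hb hk) hpk,
      card_insert_of_notMem hk_notMem, Nat.cast_succ, hj0,
      Nat.cast_card_filter_not_dvd_Icc_of_mod_eq_one hp.ne_zero
        (sub_pow_mod_eq_one_of_eq_mul_pow_add_one hp hpm hb hk), Nat.cast_sub hpb]
    push_cast
    ring

/-- For a prime `p` and `k ≥ 3` with `p ∤ k`:
`ℛ' = {j ∈ ℛ : p ∤ j}`; if `p ∤ (k−1)` then `#ℛ' = k − ⌊k/p⌋`; and if
`k = m·p^b + 1` with `m, b ≥ 1` and `p ∤ m`, then `#ℛ' = (1 − 1/p)(k − p^b) + (1 + 1/p)`. -/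
theorem R'set_eq_and_card (p k : ℕ) (hp : p.Prime) (hk : 3 ≤ k) (hpk : ¬ p ∣ k) :
    R'set p k = (Rset p k).filter (fun j => ¬ p ∣ j) ∧
    (¬ p ∣ (k - 1) → (R'set p k).card = k - k / p) ∧
    (∀ m b : ℕ, 1 ≤ m → 1 ≤ b → ¬ p ∣ m → k = m * p ^ b + 1 →
      ((R'set p k).card : ℚ) = (1 - 1 / (p : ℚ)) * ((k : ℚ) - (p : ℚ) ^ b) + (1 + 1 / (p : ℚ))) :=
  R'set_eq_and_card_general p k hp hpk

end FFW
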